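/- arXiv:2509.06828 — 4 statements merged into one kernel-verified Lean document; each statement's English description precedes it below -/
import Mathlib

section
/- For all Kerr parameters M > 0 and 0 ≤ a ≤ M, and all r ≥ r₊, one has a²·Δ(r)/(4(r²+a²)²) ≤ (3 − 2√2)/16, with equality if and only if a = M and r = (1+√2)·M. (The quantity on the left equals the product |𝔥|_∞(r)·|𝔨|_∞(r) of the maximal norms of the projection one-forms, so this determines its supremum over the exterior regions of all sub-extremal and extremal Kerr spacetimes.) -/
set_option maxHeartbeats 1000000 in
/-- The supremum of the product `|𝔥|_∞ |𝔨|_∞ = a² Δ/(4(r²+a²)²)` over the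
exterior regions of all (sub-)extremal Kerr spacetimes: for `M > 0`,
`0 ≤ a ≤ M` and all `r ≥ r₊ := M + √(M² − a²)`, with `Δ(r) := r² − 2Mr + a²`,
one has `a² Δ(r)/(4(r²+a²)²) ≤ (3 − 2√2)/16`, with equality if and only if
`a = M` and `r = (1+√2) M`. -/
theorem kerr_hk_product_le (M a r : ℝ) (hM : 0 < M) (ha0 : 0 ≤ a) (haM : a ≤ M)
    (hr : M + Real.sqrt (M ^ 2 - a ^ 2) ≤ r) :
    a ^ 2 * (r ^ 2 - 2 * M * r + a ^ 2) / (4 * (r ^ 2 + a ^ 2) ^ 2)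
      ≤ (3 - 2 * Real.sqrt 2) / 16
    ∧ (a ^ 2 * (r ^ 2 - 2 * M * r + a ^ 2) / (4 * (r ^ 2 + a ^ 2) ^ 2)
          = (3 - 2 * Real.sqrt 2) / 16
        ↔ a = M ∧ r = (1 + Real.sqrt 2) * M) := by
  set s := Real.sqrt 2 with hs_def
  have hs2 : s ^ 2 = 2 := Real.sq_sqrt (by norm_num)
  have hs0 : 0 ≤ s := Real.sqrt_nonneg 2
  have hs1 : 1 < s := by nlinarith
  have hs32 : s < 3 / 2 := by
    have h1 : Real.sqrt 2 < Real.sqrt (9 / 4) :=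
      Real.sqrt_lt_sqrt (by norm_num) (by norm_num)
    have h94 : Real.sqrt (9 / 4) = 3 / 2 := by
      rw [show (9 : ℝ) / 4 = (3 / 2) ^ 2 by norm_num, Real.sqrt_sq (by norm_num)]
    rw [hs_def]; linarith [h1, h94.le]
  have hrM : M ≤ r := le_trans (by nlinarith [Real.sqrt_nonneg (M ^ 2 - a ^ 2)]) hr
  have hr0 : 0 < r := lt_of_lt_of_le hM hrM
  have hden : (0 : ℝ) < 4 * (r ^ 2 + a ^ 2) ^ 2 := by positivity
  -- A ≥ 0
  have hAeq : (s - 1) / 2 * (r ^ 2 + a ^ 2) - a * (r - M)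
      = (s - 1) / 2 * (r - a * (s + 1)) ^ 2 + a * (M - a) := by
    linear_combination (a * r - a ^ 2 * (s + 1) / 2 - a ^ 2 * (s - 1) / 2 + a ^ 2 * (s - 1) / 2) * hs2
  have hA : 0 ≤ (s - 1) / 2 * (r ^ 2 + a ^ 2) - a * (r - M) := by
    rw [hAeq]
    have h1 : 0 ≤ (s - 1) / 2 * (r - a * (s + 1)) ^ 2 :=
      mul_nonneg (by linarith) (sq_nonneg _)
    have h2 : 0 ≤ a * (M - a) := mul_nonneg ha0 (by linarith)
    linarith
  have hB : 0 ≤ (s - 1) / 2 * (r ^ 2 + a ^ 2) + a * (r - M) := by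
    have h1 : 0 ≤ (s - 1) / 2 * (r ^ 2 + a ^ 2) :=
      mul_nonneg (by linarith) (by positivity)
    have h2 : 0 ≤ a * (r - M) := mul_nonneg ha0 (by linarith)
    linarith
  have hMa2 : 0 ≤ a ^ 2 * (M ^ 2 - a ^ 2) :=
    mul_nonneg (sq_nonneg a)
      (by nlinarith [mul_nonneg (sub_nonneg.2 haM) (by linarith : (0:ℝ) ≤ M + a)])
  -- key identity
  have key : (3 - 2 * s) / 4 * (r ^ 2 + a ^ 2) ^ 2 - a ^ 2 * (r ^ 2 - 2 * M * r + a ^ 2)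
      = ((s - 1) / 2 * (r ^ 2 + a ^ 2) - a * (r - M))
        * ((s - 1) / 2 * (r ^ 2 + a ^ 2) + a * (r - M))
        + a ^ 2 * (M ^ 2 - a ^ 2) := by
    linear_combination (-(r ^ 2 + a ^ 2) ^ 2 / 4) * hs2
  have hE : 0 ≤ (3 - 2 * s) / 4 * (r ^ 2 + a ^ 2) ^ 2
      - a ^ 2 * (r ^ 2 - 2 * M * r + a ^ 2) := by
    rw [key]; exact add_nonneg (mul_nonneg hA hB) hMa2
  constructor
  · rw [div_le_div_iff₀ hden (by norm_num : (0 : ℝ) < 16)]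
    nlinarith [hE]
  constructor
  · intro heq
    rw [div_eq_div_iff hden.ne' (by norm_num : (16 : ℝ) ≠ 0)] at heq
    have hE0 : ((s - 1) / 2 * (r ^ 2 + a ^ 2) - a * (r - M))
        * ((s - 1) / 2 * (r ^ 2 + a ^ 2) + a * (r - M))
        + a ^ 2 * (M ^ 2 - a ^ 2) = 0 := by
      rw [← key]; linarith
    have hAB0 : ((s - 1) / 2 * (r ^ 2 + a ^ 2) - a * (r - M))
        * ((s - 1) / 2 * (r ^ 2 + a ^ 2) + a * (r - M)) = 0 := by
      linarith [mul_nonneg hA hB, hMa2, hE0]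
    have haM2 : a ^ 2 * (M ^ 2 - a ^ 2) = 0 := by
      linarith [mul_nonneg hA hB, hMa2, hE0]
    have ha : a = M := by
      rcases mul_eq_zero.mp haM2 with h | h
      · exfalso
        have ha0' : a = 0 := by
          exact pow_eq_zero_iff two_ne_zero |>.mp h
        rw [ha0'] at heq
        have hpos : 0 < (3 - 2 * s) * (4 * (r ^ 2 + (0:ℝ) ^ 2) ^ 2) :=
          mul_pos (by linarith) (by positivity)
        linarith [heq, hpos]
      · have h' : (M - a) * (M + a) = 0 := by linear_combination h
        rcases mul_eq_zero.mp h' with h2 | h2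
        · linarith
        · linarith
    subst ha
    refine ⟨rfl, ?_⟩
    have hBpos : 0 < (s - 1) / 2 * (r ^ 2 + a ^ 2) + a * (r - a) := by
      have h1 : 0 < (s - 1) / 2 * (r ^ 2 + a ^ 2) :=
        mul_pos (by linarith) (by positivity)
      have h2 : 0 ≤ a * (r - a) := mul_nonneg ha0 (by linarith)
      linarith
    have hA0 : (s - 1) / 2 * (r ^ 2 + a ^ 2) - a * (r - a) = 0 := by
      rcases mul_eq_zero.mp hAB0 with h | h
      · exact h
      · exact absurd h (ne_of_gt hBpos)
    rw [hAeq] at hA0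
    have h' : (s - 1) / 2 * (r - a * (s + 1)) ^ 2 = 0 := by linarith
    have hQ : (r - a * (s + 1)) ^ 2 = 0 := by
      rcases mul_eq_zero.mp h' with h | h
      · exfalso; linarith
      · exact h
    have := pow_eq_zero_iff two_ne_zero |>.mp hQ
    linarith
  · rintro ⟨ha, hreq⟩
    subst ha
    subst hreq
    rw [div_eq_div_iff (by positivity : (0:ℝ) < 4 * (((1 + s) * a) ^ 2 + a ^ 2) ^ 2).ne'
      (by norm_num : (16 : ℝ) ≠ 0)]
    linear_combination (a ^ 4 * (8 * s ^ 3 + 20 * s ^ 2 + 32 * s + 24)) * hs2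
end

section
/- For all Kerr parameters M > 0 and 0 ≤ a ≤ M, and all r ≥ r₊, setting x := a²·Δ(r)/(4(r²+a²)²) and q := 2·(1 − (2+√2)·x), one has q·(1−2x)·(1−6x) − √2·x·(3−2x) ≥ (610 + 191·√2)/512 > 0, with equality attained exactly for a = M at r = (1+√2)·r₊ (i.e. r = (1+√2)·M, since r₊ = M when a = M). (This is the key positivity established at the end of the proof of the paper's Proposition on top-order angular elliptic estimates, which allows the absorption of all top-order error terms in the full sub-extremal range |a| < M, uniformly up to a = M.) -/
set_option maxHeartbeats 1000000

/-- The key positivity concluding the paper's top-order angular elliptic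
estimates: for `M > 0`, `0 ≤ a ≤ M` and all `r ≥ r₊ := M + √(M² − a²)`, with
`x := a² Δ(r)/(4(r²+a²)²)` (where `Δ(r) := r² − 2Mr + a²`) and
`q := 2(1 − (2+√2) x)`, one has
`q (1−2x)(1−6x) − √2 x (3−2x) ≥ (610 + 191√2)/512 > 0`, with equality
attained exactly for `a = M` at `r = (1+√2) r₊`. -/
theorem kerr_absorption_positivity (M a r : ℝ) (hM : 0 < M) (ha0 : 0 ≤ a) (haM : a ≤ M)
    (hr : M + Real.sqrt (M ^ 2 - a ^ 2) ≤ r) :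
    let x : ℝ := a ^ 2 * (r ^ 2 - 2 * M * r + a ^ 2) / (4 * (r ^ 2 + a ^ 2) ^ 2)
    let q : ℝ := 2 * (1 - (2 + Real.sqrt 2) * x)
    (q * (1 - 2 * x) * (1 - 6 * x) - Real.sqrt 2 * x * (3 - 2 * x)
        ≥ (610 + 191 * Real.sqrt 2) / 512)
    ∧ (610 + 191 * Real.sqrt 2) / 512 > 0
    ∧ (q * (1 - 2 * x) * (1 - 6 * x) - Real.sqrt 2 * x * (3 - 2 * x)
          = (610 + 191 * Real.sqrt 2) / 512
        ↔ a = M ∧ r = (1 + Real.sqrt 2) * (M + Real.sqrt (M ^ 2 - a ^ 2))) := by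
  intro x q
  have hx_def : x = a ^ 2 * (r ^ 2 - 2 * M * r + a ^ 2) / (4 * (r ^ 2 + a ^ 2) ^ 2) := rfl
  have hq_def : q = 2 * (1 - (2 + Real.sqrt 2) * x) := rfl
  clear_value x q
  set s : ℝ := Real.sqrt 2 with hs_def
  have hs2 : s ^ 2 = 2 := Real.sq_sqrt (by norm_num)
  have hs0 : 0 ≤ s := Real.sqrt_nonneg 2
  have hs1 : 1 < s := by nlinarith
  have hs32 : s < 3 / 2 := by nlinarith
  set w : ℝ := Real.sqrt (M ^ 2 - a ^ 2) with hw_def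
  have hw0 : 0 ≤ w := Real.sqrt_nonneg _
  have hw2 : w ^ 2 = M ^ 2 - a ^ 2 := Real.sq_sqrt (by nlinarith)
  have hrM : M ≤ r := by linarith
  have hr0 : 0 < r := lt_of_lt_of_le hM hrM
  have hΔ : 0 ≤ r ^ 2 - 2 * M * r + a ^ 2 := by nlinarith [sq_nonneg (r - M - w)]
  have hden : (0:ℝ) < 4 * (r ^ 2 + a ^ 2) ^ 2 := by positivity
  have hx0 : 0 ≤ x := by
    rw [hx_def]
    exact div_nonneg (mul_nonneg (sq_nonneg a) hΔ) (le_of_lt hden)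
  -- key algebraic inequality: 2a(r-a) ≤ (s-1)(r²+a²)
  have hkey : 2 * a * (r - a) ≤ (s - 1) * (r ^ 2 + a ^ 2) := by
    nlinarith [mul_nonneg (by linarith : (0:ℝ) ≤ s - 1) (sq_nonneg (r - (1 + s) * a))]
  have hra : a ≤ r := le_trans haM hrM
  have hΔle : r ^ 2 - 2 * M * r + a ^ 2 ≤ (r - a) ^ 2 := by nlinarith
  have hnn : 0 ≤ 2 * a * (r - a) := mul_nonneg (by linarith) (by linarith)
  have hsq : (2 * a * (r - a)) ^ 2 ≤ ((s - 1) * (r ^ 2 + a ^ 2)) ^ 2 :=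
    pow_le_pow_left₀ hnn hkey 2
  have hexp : ((s - 1) * (r ^ 2 + a ^ 2)) ^ 2 = (3 - 2 * s) * (r ^ 2 + a ^ 2) ^ 2 := by
    linear_combination (r ^ 2 + a ^ 2) ^ 2 * hs2
  have hsq' : (2 * a * (r - a)) ^ 2 = 4 * (a ^ 2 * (r - a) ^ 2) := by ring
  have hΔle2 : a ^ 2 * (r ^ 2 - 2 * M * r + a ^ 2) ≤ a ^ 2 * (r - a) ^ 2 :=
    mul_le_mul_of_nonneg_left hΔle (sq_nonneg a)
  -- hence x ≤ (3 - 2s)/16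
  have hchain : 4 * (a ^ 2 * (r ^ 2 - 2 * M * r + a ^ 2)) ≤ (3 - 2 * s) * (r ^ 2 + a ^ 2) ^ 2 := by
    linarith [hsq, hexp, hsq', hΔle2]
  have hxub : x ≤ (3 - 2 * s) / 16 := by
    rw [hx_def, div_le_div_iff₀ hden (by norm_num)]
    linarith [hchain]
  -- the factorization identity
  have hfact : q * (1 - 2 * x) * (1 - 6 * x) - s * x * (3 - 2 * x) - (610 + 191 * s) / 512
      = ((3 - 2 * s) / 16 - x) *
        ((48 + 24 * s) * x ^ 2 - (53 + 39 / 2 * s) * x + (239 / 16 + 255 / 32 * s)) := by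
    rw [hq_def]
    linear_combination (3 * x ^ 2 - 39 / 16 * x + 255 / 256) * hs2
  have hx16 : x ≤ 1 / 16 := by linarith
  have hQpos : 0 < (48 + 24 * s) * x ^ 2 - (53 + 39 / 2 * s) * x + (239 / 16 + 255 / 32 * s) := by
    have h1 : 0 ≤ (48 + 24 * s) * x ^ 2 := by positivity
    have h2 : 0 ≤ (53 + 39 / 2 * s) * (1 / 16 - x) :=
      mul_nonneg (by linarith) (by linarith)
    nlinarith [h1, h2]
  have hgap : 0 ≤ (3 - 2 * s) / 16 - x := by linarith
  refine ⟨by nlinarith [mul_nonneg hgap (le_of_lt hQpos)], by linarith, ?_⟩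
  constructor
  · intro heq
    have hx_eq : x = (3 - 2 * s) / 16 := by
      have h0 : ((3 - 2 * s) / 16 - x) *
          ((48 + 24 * s) * x ^ 2 - (53 + 39 / 2 * s) * x + (239 / 16 + 255 / 32 * s)) = 0 := by
        rw [← hfact]; linarith
      rcases mul_eq_zero.mp h0 with h | h
      · linarith
      · exact absurd h (ne_of_gt hQpos)
    -- from x = x*: equality throughout the chain
    have h' : a ^ 2 * (r ^ 2 - 2 * M * r + a ^ 2)
        = (3 - 2 * s) / 16 * (4 * (r ^ 2 + a ^ 2) ^ 2) := by
      rw [hx_def] at hx_eq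
      exact (div_eq_iff (ne_of_gt hden)).mp hx_eq
    have hEq : 4 * (a ^ 2 * (r ^ 2 - 2 * M * r + a ^ 2)) = (3 - 2 * s) * (r ^ 2 + a ^ 2) ^ 2 := by
      linear_combination 4 * h'
    have hsum : 0 < r ^ 2 + a ^ 2 := by positivity
    -- a > 0
    have ha_pos : 0 < a := by
      rcases lt_or_eq_of_le ha0 with h | h
      · exact h
      · exfalso
        rw [← h] at hEq
        nlinarith only [hEq, mul_pos (show (0:ℝ) < 3 - 2 * s by linarith)
          (pow_pos (show (0:ℝ) < r ^ 2 + 0 ^ 2 by positivity) 2)]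
    -- M = a
    have hMa : M = a := by
      by_contra hne
      have hMa' : a < M := lt_of_le_of_ne haM (fun h => hne h.symm)
      have hd : r ^ 2 - 2 * M * r + a ^ 2 < (r - a) ^ 2 := by
        nlinarith only [mul_pos hr0 (show (0:ℝ) < M - a by linarith)]
      have h1 : a ^ 2 * (r ^ 2 - 2 * M * r + a ^ 2) < a ^ 2 * (r - a) ^ 2 :=
        mul_lt_mul_of_pos_left hd (by positivity)
      linarith only [hsq, hexp, hsq', h1, hEq]
    -- r = (1+s)a
    have hr_eq : r = (1 + s) * a := by
      have h2 : (2 * a * (r - a)) ^ 2 = ((s - 1) * (r ^ 2 + a ^ 2)) ^ 2 := by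
        linear_combination hEq - (r ^ 2 + a ^ 2) ^ 2 * hs2 + 8 * a ^ 2 * r * hMa
      have hb : 0 ≤ (s - 1) * (r ^ 2 + a ^ 2) := mul_nonneg (by linarith) (le_of_lt hsum)
      have h3 : 2 * a * (r - a) = (s - 1) * (r ^ 2 + a ^ 2) := by
        have hz : (2 * a * (r - a) - (s - 1) * (r ^ 2 + a ^ 2))
            * (2 * a * (r - a) + (s - 1) * (r ^ 2 + a ^ 2)) = 0 := by
          linear_combination h2
        rcases mul_eq_zero.mp hz with h | h
        · linarith
        · linarith
      have h4 : (s - 1) * (r - (1 + s) * a) ^ 2 = 0 := by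
        linear_combination (-1 : ℝ) * h3 + (a ^ 2 * (s + 1) - 2 * a * r) * hs2
      have h5 : (r - (1 + s) * a) ^ 2 = 0 := by
        rcases mul_eq_zero.mp h4 with h | h
        · exact absurd h (by intro hh; linarith)
        · exact h
      have h6 : r - (1 + s) * a = 0 := by
        exact pow_eq_zero_iff (two_ne_zero) |>.mp h5
      linarith
    have hw_zero : w = 0 := by
      rw [hw_def, hMa]
      simp
    refine ⟨hMa.symm, ?_⟩
    rw [hw_zero, hMa, hr_eq]
    ring
  · rintro ⟨haM', hre⟩
    have ha' : 0 < a := haM' ▸ hM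
    have hw_zero : w = 0 := by rw [hw_def, haM']; simp
    rw [hw_zero] at hre
    have hr' : r = (1 + s) * a := by rw [hre, haM']; ring
    have hdenpos : (0:ℝ) < 4 * (((1 + s) * a) ^ 2 + a ^ 2) ^ 2 := by
      have h1 : (0:ℝ) < ((1 + s) * a) ^ 2 + a ^ 2 :=
        lt_of_lt_of_le (pow_pos ha' 2) (le_add_of_nonneg_left (sq_nonneg _))
      have := pow_pos h1 2
      linarith
    have hx_eq : x = (3 - 2 * s) / 16 := by
      rw [hx_def, hr', div_eq_iff (ne_of_gt hdenpos)]
      linear_combination 2 * (1 + s) * a ^ 3 * haM'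
        + a ^ 4 * (3 / 2 + 2 * s + 5 / 4 * s ^ 2 + 1 / 2 * s ^ 3) * hs2
    have hz : (3 - 2 * s) / 16 - x = 0 := by rw [hx_eq]; ring
    have h := hfact
    rw [hz, zero_mul] at h
    linarith
end

section
/- For all Kerr parameters M > 0 and 0 ≤ a ≤ M, and all r ≥ r₊, with l(r) := Mr/(2(r²+a²)) one has the identity (a²/M²)·(Δ(r)/r²)·l(r)² = a²·Δ(r)/(4(r²+a²)²), and the lower bounds 1 − 2·(a²/M²)·(Δ(r)/r²)·l(r)² ≥ (5 + 2√2)/8 > 0 and 1 − 6·(a²/M²)·(Δ(r)/r²)·l(r)² ≥ (6√2 − 1)/8 > 0. (These are the positivity properties of the prefactors 1 − 2(a²/M²)(Δ/r²)l² and 1 − 6(a²/M²)(Δ/r²)l² multiplying the left-hand sides of the paper's L²(S²) estimates for null and angular derivatives of the linearised curvature components.) -/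
/-- Positivity of the prefactors `1 − 2(a²/M²)(Δ/r²)l²` and
`1 − 6(a²/M²)(Δ/r²)l²` in the paper's `L²(S²)`-estimates: for `M > 0`,
`0 ≤ a ≤ M` and all `r ≥ r₊ := M + √(M² − a²)`, with `Δ(r) := r² − 2Mr + a²`
and `l(r) := M r/(2(r²+a²))`, one has the identity
`(a²/M²)(Δ/r²) l² = a² Δ/(4(r²+a²)²)` and the lower bounds
`1 − 2(a²/M²)(Δ/r²)l² ≥ (5+2√2)/8 > 0` and
`1 − 6(a²/M²)(Δ/r²)l² ≥ (6√2−1)/8 > 0`. -/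
theorem kerr_prefactor_positivity (M a r : ℝ) (hM : 0 < M) (ha0 : 0 ≤ a) (haM : a ≤ M)
    (hr : M + Real.sqrt (M ^ 2 - a ^ 2) ≤ r) :
    let Δ : ℝ := r ^ 2 - 2 * M * r + a ^ 2
    let l : ℝ := M * r / (2 * (r ^ 2 + a ^ 2))
    (a ^ 2 / M ^ 2 * (Δ / r ^ 2) * l ^ 2 = a ^ 2 * Δ / (4 * (r ^ 2 + a ^ 2) ^ 2))
    ∧ 1 - 2 * (a ^ 2 / M ^ 2 * (Δ / r ^ 2) * l ^ 2) ≥ (5 + 2 * Real.sqrt 2) / 8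
    ∧ (5 + 2 * Real.sqrt 2) / 8 > 0
    ∧ 1 - 6 * (a ^ 2 / M ^ 2 * (Δ / r ^ 2) * l ^ 2) ≥ (6 * Real.sqrt 2 - 1) / 8
    ∧ (6 * Real.sqrt 2 - 1) / 8 > 0 := by
  intro Δ l
  have hΔdef : Δ = r ^ 2 - 2 * M * r + a ^ 2 := rfl
  have hldef : l = M * r / (2 * (r ^ 2 + a ^ 2)) := rfl
  clear_value Δ l
  have hs0 : (0:ℝ) ≤ Real.sqrt (M ^ 2 - a ^ 2) := Real.sqrt_nonneg _
  have hrM : M ≤ r := by linarith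
  have hr0 : 0 < r := lt_of_lt_of_le hM hrM
  have har : a ≤ r := le_trans haM hrM
  have hs : Real.sqrt 2 ^ 2 = 2 := Real.sq_sqrt (by norm_num)
  have hs1 : (1:ℝ) ≤ Real.sqrt 2 := by
    nlinarith [Real.sqrt_nonneg 2]
  have hsum : (0:ℝ) < r ^ 2 + a ^ 2 := by positivity
  -- identity
  have hid : a ^ 2 / M ^ 2 * (Δ / r ^ 2) * l ^ 2
      = a ^ 2 * Δ / (4 * (r ^ 2 + a ^ 2) ^ 2) := by
    rw [hΔdef, hldef]
    field_simp
    ring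
  -- key bound: a² Δ ≤ ((3 - 2√2)/4) (r²+a²)²
  have hΔle : Δ ≤ (r - a) ^ 2 := by
    rw [hΔdef]; nlinarith
  have hlin : 2 * (a * (r - a)) ≤ (Real.sqrt 2 - 1) * (r ^ 2 + a ^ 2) := by
    nlinarith [sq_nonneg (r - (Real.sqrt 2 + 1) * a), hs, hs1]
  have hprod : a * (r - a) ≥ 0 := mul_nonneg ha0 (by linarith)
  have hkey : a ^ 2 * Δ ≤ (3 - 2 * Real.sqrt 2) / 4 * (r ^ 2 + a ^ 2) ^ 2 := by
    have h1 : a ^ 2 * Δ ≤ (a * (r - a)) ^ 2 := by nlinarith [sq_nonneg a]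
    have h2 : (2 * (a * (r - a))) ^ 2 ≤ ((Real.sqrt 2 - 1) * (r ^ 2 + a ^ 2)) ^ 2 := by
      apply sq_le_sq' <;> nlinarith
    have h3 : ((Real.sqrt 2 - 1) * (r ^ 2 + a ^ 2)) ^ 2
        = (3 - 2 * Real.sqrt 2) * (r ^ 2 + a ^ 2) ^ 2 := by
      linear_combination (r ^ 2 + a ^ 2) ^ 2 * hs
    have h4 : (2 * (a * (r - a))) ^ 2 = 4 * (a * (r - a)) ^ 2 := by ring
    linarith
  have hQ : a ^ 2 * Δ / (4 * (r ^ 2 + a ^ 2) ^ 2) ≤ (3 - 2 * Real.sqrt 2) / 16 := by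
    rw [div_le_iff₀ (by positivity)]
    linarith
  refine ⟨hid, ?_, by positivity, ?_, by linarith⟩
  · rw [hid]; linarith
  · rw [hid]; linarith
end

section
/- Let h, k ∈ [0,1] with h·k ≤ (3 − 2√2)/16, and let B, B̄, P, E be nonnegative real numbers satisfying the three inequalities: (i) 2·(1 − (2+√2)·hk)·B ≤ √2·h·P + E; (ii) 2·(1 − (2+√2)·hk)·B̄ ≤ √2·k·P + E; (iii) (1 − 2hk)·(1 − 6hk)·P ≤ 2k·(1 − hk)·B + h·B̄ + E. Then P ≤ 3E, B ≤ 3E and B̄ ≤ 3E. (This is the absorption argument concluding the proof of the paper's Proposition giving top-order angular elliptic estimates: with B, B̄, P the L²(S²)-norms of the third angular derivatives of the projected linearised curvature components β, β̄ and (ρ,σ), h = |𝔥|_∞, k = |𝔨|_∞, and E the controlled terms involving the extremal curvature components α, ᾱ and lower-order terms, the 'good' structure of the β and β̄ estimates absorbs the 'bad' top-order term in the (ρ,σ) estimate.) -/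
set_option maxHeartbeats 1000000


/-- The absorption argument concluding the paper's top-order angular elliptic
estimates: if `h, k ∈ [0,1]` with `h k ≤ (3 − 2√2)/16`, and nonnegative reals
`B, B̄, P, E` satisfy
(i) `2(1 − (2+√2) h k) B ≤ √2 h P + E`,
(ii) `2(1 − (2+√2) h k) B̄ ≤ √2 k P + E`,
(iii) `(1 − 2hk)(1 − 6hk) P ≤ 2k(1 − hk) B + h B̄ + E`,
then `P ≤ 3E`, `B ≤ 3E` and `B̄ ≤ 3E`. -/
theorem elliptic_absorption (h k B Bb P E : ℝ)
    (hh : h ∈ Set.Icc (0 : ℝ) 1) (hk : k ∈ Set.Icc (0 : ℝ) 1)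
    (hhk : h * k ≤ (3 - 2 * Real.sqrt 2) / 16)
    (hB : 0 ≤ B) (hBb : 0 ≤ Bb) (hP : 0 ≤ P) (hE : 0 ≤ E)
    (h1 : 2 * (1 - (2 + Real.sqrt 2) * (h * k)) * B ≤ Real.sqrt 2 * h * P + E)
    (h2 : 2 * (1 - (2 + Real.sqrt 2) * (h * k)) * Bb ≤ Real.sqrt 2 * k * P + E)
    (h3 : (1 - 2 * (h * k)) * (1 - 6 * (h * k)) * P
            ≤ 2 * k * (1 - h * k) * B + h * Bb + E) :
    P ≤ 3 * E ∧ B ≤ 3 * E ∧ Bb ≤ 3 * E := by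
  obtain ⟨hh0, hh1⟩ := hh
  obtain ⟨hk0, hk1⟩ := hk
  set s := Real.sqrt 2 with hs
  have hs2 : s ^ 2 = 2 := Real.sq_sqrt (by norm_num)
  have hs0 : 0 ≤ s := Real.sqrt_nonneg 2
  have hs1 : (14:ℝ) / 10 ≤ s := by nlinarith
  have hsu : s ≤ 3 / 2 := by nlinarith
  set x := h * k with hx
  have hx0 : 0 ≤ x := mul_nonneg hh0 hk0
  have hxu : x ≤ (3 - 2 * s) / 16 := hhk
  have hxs : x ≤ 1 / 64 := by nlinarith
  have hc : (0:ℝ) < 2 * (1 - (2 + s) * x) := by nlinarith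
  have hk1x : 0 ≤ 2 * k * (1 - x) := by nlinarith
  -- key combined inequality
  have t3 := mul_le_mul_of_nonneg_left h3 hc.le
  have t1 := mul_le_mul_of_nonneg_left h1 hk1x
  have t2 := mul_le_mul_of_nonneg_left h2 hh0
  have e1 : 2 * k * (1 - x) * (s * h * P + E)
      = 2 * s * x * (1 - x) * P + 2 * k * (1 - x) * E := by rw [hx]; ring
  have e2 : h * (s * k * P + E) = s * x * P + h * E := by rw [hx]; ring
  have hEc : (2 * k * (1 - x) + h + 2 * (1 - (2 + s) * x)) * E ≤ 5 * E := by
    nlinarith [mul_nonneg hx0 hE, mul_nonneg (mul_nonneg hk0 hx0) hE,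
      mul_nonneg (mul_nonneg hs0 hx0) hE,
      mul_nonneg (sub_nonneg.2 hk1) hE, mul_nonneg (sub_nonneg.2 hh1) hE]
  have key : (2 * (1 - (2 + s) * x) * (1 - 2 * x) * (1 - 6 * x) - s * x * (3 - 2 * x)) * P
      ≤ 5 * E := by linarith [t1, t2, t3, e1, e2, hEc]
  have hbracket : (5:ℝ) / 3
      ≤ 2 * (1 - (2 + s) * x) * (1 - 2 * x) * (1 - 6 * x) - s * x * (3 - 2 * x) := by
    have q1 : (0:ℝ) ≤ 56 + 18 * s - (48 + 24 * s) * x := by nlinarith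
    have q2 : (0:ℝ) ≤ (20 + 5 * s) * ((3 - 2 * s) / 16 - x) := by
      apply mul_nonneg <;> nlinarith
    nlinarith [mul_nonneg (mul_nonneg hx0 hx0) q1, q2]
  have hPE : P ≤ 3 * E := by
    nlinarith [mul_le_mul_of_nonneg_right hbracket hP, key]
  have hcoef : (0:ℝ) ≤ (5 - 3 * s - 6 * (2 + s) * x) * E := by
    apply mul_nonneg _ hE
    nlinarith [mul_nonneg hs0 hx0]
  refine ⟨hPE, ?_, ?_⟩
  · have hb : 2 * (1 - (2 + s) * x) * B ≤ 2 * (1 - (2 + s) * x) * (3 * E) := by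
      nlinarith [mul_le_mul_of_nonneg_left hPE (mul_nonneg hs0 hh0),
        mul_nonneg (mul_nonneg hs0 (sub_nonneg.2 hh1)) hE, hcoef]
    exact le_of_mul_le_mul_left hb hc
  · have hb : 2 * (1 - (2 + s) * x) * Bb ≤ 2 * (1 - (2 + s) * x) * (3 * E) := by
      nlinarith [mul_le_mul_of_nonneg_left hPE (mul_nonneg hs0 hk0),
        mul_nonneg (mul_nonneg hs0 (sub_nonneg.2 hk1)) hE, hcoef]
    exact le_of_mul_le_mul_left hb hc
end
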